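/- Let Λ be a finite-dimensional selfinjective algebra, Q a finite acyclic quiver, and A = (α_s, …, α_1) a sequence of arrows such that for i > j there is no path from t(α_i) to s(α_j). If for a ΛQ-module M the module Mono_A(M) = Mono_{α_1}(…Mono_{α_s}(M)…) is separated monic, then the epimorphism in the short exact sequence 0 → ⊕_{i=1}^s P_{t(α_i)}(E(M_{s(α_i)})) → Mono_A(M) → M → 0 is a right approximation of M in the category of Gorenstein-projective ΛQ-modules. -/

import Mathlib

open Function LinearMap

/-- A representation of the quiver with vertex set `V` and arrow family `E`
over the ring `Λ`: a `Λ`-module at every vertex and a linear map along every arrow. -/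
structure QRep (Λ : Type) [Ring Λ] {V : Type} (E : V → V → Type) : Type 1 where
  obj : V → Type
  [acg : ∀ i, AddCommGroup (obj i)]
  [mod : ∀ i, Module Λ (obj i)]
  map : ∀ {i j : V}, E i j → (obj i →ₗ[Λ] obj j)

attribute [instance] QRep.acg QRep.mod

namespace QRep

variable {Λ : Type} [Ring Λ] {V : Type} {E : V → V → Type}

/-- Morphisms of representations. -/
@[ext]
structure Hom (X Y : QRep Λ E) where
  app : ∀ i, X.obj i →ₗ[Λ] Y.obj i
  comm : ∀ {i j : V} (a : E i j), (Y.map a).comp (app i) = (app j).comp (X.map a)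

def Hom.id (X : QRep Λ E) : Hom X X :=
  ⟨fun _ => LinearMap.id, fun _ => by ext; rfl⟩

def Hom.comp {X Y Z : QRep Λ E} (g : Hom Y Z) (f : Hom X Y) : Hom X Z :=
  ⟨fun i => (g.app i).comp (f.app i), fun {i j} a => by
    ext x
    have h1 := LinearMap.congr_fun (f.comm a) x
    have h2 := LinearMap.congr_fun (g.comm a) (f.app i x)
    simp only [LinearMap.comp_apply] at h1 h2 ⊢
    rw [h2, h1]⟩

def Hom.sub {X Y : QRep Λ E} (f g : Hom X Y) : Hom X Y :=
  ⟨fun i => f.app i - g.app i, fun {i j} a => by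
    ext x
    have h1 := LinearMap.congr_fun (f.comm a) x
    have h2 := LinearMap.congr_fun (g.comm a) x
    simp only [LinearMap.comp_apply, LinearMap.sub_apply, map_sub] at h1 h2 ⊢
    rw [h1, h2]⟩

/-- Two representations are isomorphic. -/
def Iso (X Y : QRep Λ E) : Prop :=
  ∃ f : Hom X Y, ∀ i, Function.Bijective (f.app i)

/-- The assembled map `⊕_{a : j → i} X_j → X_i` at a vertex `i`. -/
noncomputable def uMap (X : QRep Λ E) (i : V) :
    (DirectSum (Σ j : V, E j i) (fun a => X.obj a.1)) →ₗ[Λ] X.obj i := by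
  classical exact DirectSum.toModule Λ _ _ (fun a => X.map a.2)

/-- A representation is separated monic if at every vertex the assembled map
from the direct sum of the incoming branches is injective. -/
def SeparatedMonic (X : QRep Λ E) : Prop :=
  ∀ i : V, Function.Injective (X.uMap i)

/-- Paths in the quiver given by the arrow family `E`. -/
def Path (E : V → V → Type) (i j : V) : Type := @Quiver.Path V ⟨E⟩ i j

/-- The quiver is acyclic: no nontrivial oriented cycles. -/
def Acyclic (E : V → V → Type) : Prop :=
  ∀ i : V, ∀ p : Path E i i, p = @Quiver.Path.nil V ⟨E⟩ i

/-- The representation `P_n(A) = A ⊗ P(n)`: at vertex `i` a copy of `A` for every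
path from `n` to `i`. -/
noncomputable def Pn (Λ : Type) [Ring Λ] (E : V → V → Type) (n : V) (A : Type)
    [AddCommGroup A] [Module Λ A] : QRep Λ E where
  obj i := Path E n i →₀ A
  map {i j} a := Finsupp.lmapDomain A Λ (fun p => @Quiver.Path.cons V ⟨E⟩ n i j p a)

/-- Projectivity of a representation, via the lifting property against
componentwise surjections of representations. -/
def Projective (P : QRep Λ E) : Prop :=
  ∀ (X Y : QRep Λ E) (g : Hom X Y), (∀ i, Function.Surjective (g.app i)) →
    ∀ f : Hom P Y, ∃ f' : Hom P X, g.comp f' = f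

/-- A module has no nonzero projective direct summand. -/
def NoProjSummand (Λ : Type) [Ring Λ] (M : Type) [AddCommGroup M] [Module Λ M] : Prop :=
  ∀ (P C : Type) [AddCommGroup P] [Module Λ P] [AddCommGroup C] [Module Λ C],
    Module.Projective Λ P → Nonempty (M ≃ₗ[Λ] P × C) → Subsingleton P

/-- A module has no nonzero injective direct summand. -/
def NoInjSummand (Λ : Type) [Ring Λ] (M : Type) [AddCommGroup M] [Module Λ M] : Prop :=
  ∀ (P C : Type) [AddCommGroup P] [Module Λ P] [AddCommGroup C] [Module Λ C],
    Module.Injective Λ P → Nonempty (M ≃ₗ[Λ] P × C) → Subsingleton P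

/-- A linear map factors through an injective module. -/
def FactorsThroughInjective (Λ : Type) [Ring Λ] {A B : Type}
    [AddCommGroup A] [Module Λ A] [AddCommGroup B] [Module Λ B] (f : A →ₗ[Λ] B) : Prop :=
  ∃ (J : Type) (_ : AddCommGroup J) (_ : Module Λ J), Module.Injective Λ J ∧
    ∃ (g : A →ₗ[Λ] J) (h : J →ₗ[Λ] B), f = h.comp g

/-- A morphism of representations factors through a projective representation. -/
def FactorsThroughProjective {X Y : QRep Λ E} (f : Hom X Y) : Prop :=
  ∃ (P : QRep Λ E), Projective P ∧ SeparatedMonic P ∧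
    ∃ (u : Hom X P) (v : Hom P Y), f = v.comp u

/-- Stable isomorphism: isomorphism in the stable category of Gorenstein-projective
representations modulo projectives. -/
def StIso (X Y : QRep Λ E) : Prop :=
  ∃ (f : Hom X Y) (g : Hom Y X),
    FactorsThroughProjective ((g.comp f).sub (Hom.id X)) ∧
    FactorsThroughProjective ((f.comp g).sub (Hom.id Y))

/-- `e : M →ₗ J` is an injective envelope: `J` is injective, `e` is injective and
its image is essential in `J`. -/
def IsInjEnvelope {M J : Type} [AddCommGroup M] [Module Λ M] [AddCommGroup J]
    [Module Λ J] (e : M →ₗ[Λ] J) : Prop :=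
  Module.Injective Λ J ∧ Function.Injective e ∧
    ∀ W : Submodule Λ J, Disjoint W (LinearMap.range e) → W = ⊥

end QRep
section MonoACons

variable {Λ : Type} [Ring Λ] {V : Type} {E : V → V → Type}

open QRep

namespace QRep

open Classical in
/-- The map `E_β` in the `Mono_α` construction: it is `single nil ∘ e` when `β = α`
and zero otherwise. -/
noncomputable def EMap (M : QRep Λ E) {v w : V} (α : E v w) {J : Type} [AddCommGroup J]
    [Module Λ J] (e : M.obj v →ₗ[Λ] J) {i j : V} (β : E i j) :
    M.obj i →ₗ[Λ] (Path E w j →₀ J) :=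
  if h : (⟨i, ⟨j, β⟩⟩ : Σ a : V, Σ b : V, E a b) = ⟨v, ⟨w, α⟩⟩ then by
    obtain ⟨h1, h2⟩ := Sigma.mk.inj_iff.mp h
    subst h1
    obtain ⟨h3, _⟩ := Sigma.mk.inj_iff.mp (eq_of_heq h2)
    subst h3
    exact (Finsupp.lsingle (R := Λ) (M := J) (@Quiver.Path.nil V ⟨E⟩ _)).comp e
  else 0

/-- The construction `Mono_α(M)`: the middle term of the componentwise split short
exact sequence `0 → P_w(J) → Mono_α(M) → M → 0` twisted by `e` at the arrow `α`. -/
noncomputable def MonoA (M : QRep Λ E) {v w : V} (α : E v w) {J : Type} [AddCommGroup J]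
    [Module Λ J] (e : M.obj v →ₗ[Λ] J) : QRep Λ E where
  obj i := M.obj i × (Path E w i →₀ J)
  map {i j} β := LinearMap.prod
    ((M.map β).comp (LinearMap.fst Λ _ _))
    ((Finsupp.lmapDomain J Λ (fun p => @Quiver.Path.cons V ⟨E⟩ w i j p β)).comp
        (LinearMap.snd Λ _ _)
      + (EMap M α e β).comp (LinearMap.fst Λ _ _))

/-- The canonical projection `Mono_α(M) → M`. -/
noncomputable def MonoAProj (M : QRep Λ E) {v w : V} (α : E v w) {J : Type} [AddCommGroup J]
    [Module Λ J] (e : M.obj v →ₗ[Λ] J) : Hom (MonoA M α e) M :=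
  ⟨fun _ => LinearMap.fst Λ _ _, fun {i j} β => by ext x; rfl⟩

/-- `IsMonoIter L M N π` holds when `N`, together with the projection `π : N → M`,
is obtained from `M` by successively applying the `Mono` construction at the arrows in
the list `L` (the head of `L` applied last), each time using an injective envelope. -/
inductive IsMonoIter : ∀ (L : List (Σ i : V, Σ j : V, E i j)) (M N : QRep Λ E), Hom N M → Prop
  | nil (M : QRep Λ E) : IsMonoIter [] M M (Hom.id M)
  | cons {L : List (Σ i : V, Σ j : V, E i j)} {M N : QRep Λ E} {π : Hom N M} {v w : V}
      (α : E v w) {J : Type} [AddCommGroup J] [Module Λ J] (e : N.obj v →ₗ[Λ] J)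
      (henv : IsInjEnvelope e) (h : IsMonoIter L M N π) :
      IsMonoIter (⟨v, ⟨w, α⟩⟩ :: L) M (MonoA N α e) (π.comp (MonoAProj N α e))

/-- `π : G → M` is a right approximation of `M` in the category of
Gorenstein-projective (= separated monic) representations. -/
def IsRightApprox {G M : QRep Λ E} (π : Hom G M) : Prop :=
  SeparatedMonic G ∧
    ∀ G' : QRep Λ E, SeparatedMonic G' → ∀ f : Hom G' M, ∃ g : Hom G' G, π.comp g = f

/-- `π : A → M` is the minimal right approximation of `M` in Gproj. -/
def IsMimo {M A : QRep Λ E} (π : Hom A M) : Prop :=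
  IsRightApprox π ∧ ∀ φ : Hom A A, π.comp φ = π → ∀ i, Function.Bijective (φ.app i)

end QRep
end MonoACons
namespace QRep

variable {Λ : Type} [Ring Λ] {V : Type} {E : V → V → Type}

/-- The reflected quiver `Q(v)`: every arrow ending at `v` is reversed. An arrow
`i → j` of `Q(v)` is either an arrow `i → j` of `Q` with `j ≠ v`, or the reversal
of an arrow `j → v` of `Q` (in which case `i = v`). -/
def reflE (E : V → V → Type) (v : V) : V → V → Type :=
  fun i j => {a : E i j // j ≠ v} ⊕ (PLift (i = v) × E j v)

/-- The representation `X'(v)` of the reflected quiver: the branch at `v` is replaced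
by `Ω`, the structure maps at the reversed arrows being the components of `kmap`. -/
noncomputable def reflRep (X : QRep Λ E) (v : V) (hsink : ∀ j, IsEmpty (E v j))
    (Ω : Type) [AddCommGroup Ω] [Module Λ Ω]
    (kmap : Ω →ₗ[Λ] DirectSum (Σ j : V, E j v) (fun a => X.obj a.1)) :
    QRep Λ (reflE E v) where
  obj i := (PLift (i = v) → Ω) × (PLift (i ≠ v) → X.obj i)
  map {i j} a :=
    match a with
    | Sum.inl ⟨a, _⟩ => LinearMap.prod 0
        (LinearMap.pi fun _ : PLift (j ≠ v) =>
          (X.map a).comp ((LinearMap.proj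
            (⟨fun h => (hsink j).false (h ▸ a)⟩ : PLift (i ≠ v))).comp
              (LinearMap.snd Λ _ _)))
    | Sum.inr ⟨hiv, a⟩ => LinearMap.prod 0
        (LinearMap.pi fun _ : PLift (j ≠ v) =>
          (((DirectSum.component Λ (Σ j : V, E j v) (fun b => X.obj b.1) ⟨j, a⟩).comp
              kmap).comp ((LinearMap.proj hiv).comp (LinearMap.fst Λ _ _))))

/-- The reflection relation: `Z` is (the result of) the reflection `X(v)` of the
Gorenstein-projective representation `X` at the sink `v`; it is obtained from the
representation `X'(v)` (defined via a projective cover `δ : C → coker u_X` with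
kernel `Ω` and the lifted kernel map `kmap`) by the `Mono` construction at all
reversed arrows. -/
def IsReflectionAt (X : QRep Λ E) (v : V) (hsink : ∀ j, IsEmpty (E v j))
    (Z : QRep Λ (reflE E v)) : Prop :=
  ∃ (Xbar : Type) (_ : AddCommGroup Xbar) (_ : Module Λ Xbar) (πc : X.obj v →ₗ[Λ] Xbar)
    (C : Type) (_ : AddCommGroup C) (_ : Module Λ C) (δ : C →ₗ[Λ] Xbar)
    (kmap : ↥(LinearMap.ker δ) →ₗ[Λ] DirectSum (Σ j : V, E j v) (fun a => X.obj a.1))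
    (t : C →ₗ[Λ] X.obj v),
    Function.Surjective πc ∧ LinearMap.ker πc = LinearMap.range (X.uMap v) ∧
    Module.Projective Λ C ∧ Function.Surjective δ ∧
    (∀ W : Submodule Λ C, W ⊔ LinearMap.ker δ = ⊤ → W = ⊤) ∧
    πc.comp t = δ ∧ (X.uMap v).comp kmap = t.comp (LinearMap.ker δ).subtype ∧
    ∃ (L : List (Σ i : V, Σ j : V, reflE E v i j))
      (π : Hom Z (reflRep X v hsink (↥(LinearMap.ker δ)) kmap)),
      (∀ x ∈ L, x.1 = v) ∧ L.Nodup ∧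
      (∀ (j : V) (a : E j v),
        (⟨v, j, Sum.inr ⟨⟨rfl⟩, a⟩⟩ : Σ i : V, Σ j : V, reflE E v i j) ∈ L) ∧
      IsMonoIter L (reflRep X v hsink (↥(LinearMap.ker δ)) kmap) Z π

/-- Transport of a representation along a family of bijections of arrow types. -/
def transport {E' : V → V → Type} (σ : ∀ i j, E i j ≃ E' i j) (X : QRep Λ E) :
    QRep Λ E' where
  obj := X.obj
  map {i j} a := X.map ((σ i j).symm a)

/-- `A'` is a (representation-level) syzygy of `A` in the Frobenius category of
Gorenstein-projective representations. -/
def IsSyzRep (A' A : QRep Λ E) : Prop :=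
  ∃ (P : QRep Λ E) (ι : Hom A' P) (π : Hom P A), Projective P ∧ SeparatedMonic P ∧
    (∀ i, Function.Injective (ι.app i)) ∧ (∀ i, Function.Surjective (π.app i)) ∧
    (∀ i, LinearMap.range (ι.app i) = LinearMap.ker (π.app i))

/-- `C` is a double syzygy `Ω²(A)`. -/
def IsOmega2 (A C : QRep Λ E) : Prop :=
  ∃ A', IsSyzRep A' A ∧ IsSyzRep C A'

end QRep

open CategoryTheory

/-- The category of Gorenstein-projective (= separated monic) representations. -/
def GP (Λ : Type) [Ring Λ] {V : Type} (E : V → V → Type) : Type 1 :=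
  {X : QRep Λ E // QRep.SeparatedMonic X}

instance (Λ : Type) [Ring Λ] {V : Type} (E : V → V → Type) :
    Category (GP Λ E) where
  Hom X Y := QRep.Hom X.1 Y.1
  id X := QRep.Hom.id X.1
  comp f g := g.comp f
  id_comp f := by apply QRep.Hom.ext; funext i; exact LinearMap.comp_id _
  comp_id f := by apply QRep.Hom.ext; funext i; exact LinearMap.id_comp _
  assoc f g h := by apply QRep.Hom.ext; funext i; rfl

/-- The relation identifying two morphisms whose difference factors through a
projective object. -/
def stRel (Λ : Type) [Ring Λ] {V : Type} (E : V → V → Type) : HomRel (GP Λ E) :=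
  fun {X Y} f g => QRep.FactorsThroughProjective (f.sub g)

/-- The stable category of Gorenstein-projective representations modulo projectives. -/
def StableGP (Λ : Type) [Ring Λ] {V : Type} (E : V → V → Type) : Type 1 :=
  CategoryTheory.Quotient (stRel Λ E)

noncomputable instance (Λ : Type) [Ring Λ] {V : Type} (E : V → V → Type) :
    Category (StableGP Λ E) :=
  inferInstanceAs (Category (CategoryTheory.Quotient (stRel Λ E)))

/-!
A lift of `f : G → N` along `Mono_α(N) → N`, for `α : v → w` and `e : N_v → J`, is a pair
`(f, h)` with `h : G → P_w(J)` such that `h ∘ G_β = P_w(J)_β ∘ h + E_β ∘ f` for every arrow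
`β`. Read at the coordinate of a path `p` from `w`, this prescribes the restrictions of the
functional `h_p` on `G_{t(p)}` to all incoming branches: `e ∘ f_v` on the branch `α` if `p` is
trivial, `h_q` on the branch `β` if `p = q β`, and zero on every other branch. Since `G` is
separated monic, the map `⊕ G_{s(β)} → G_j` from the incoming branches is injective, so
injectivity of `J` provides such functionals, built by recursion on `p`. In a finite acyclic
quiver there are finitely many paths, so `h` lands in `P_w(J)`. Composing the lifts along the
iteration handles `Mono_A`.
-/

namespace Quiver.Path

variable {V : Type*} [Quiver V] {M : Type*} [AddCommMonoid M] {a b c : V}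

theorem mapDomain_cons_apply_nil (β : b ⟶ a) (y : Path a b →₀ M) :
    Finsupp.mapDomain (fun p => p.cons β) y nil = 0 :=
  Finsupp.mapDomain_of_notMem_range _ _ fun ⟨p, hp⟩ => cons_ne_nil p β hp

theorem mapDomain_cons_apply_cons (β : b ⟶ c) (y : Path a b →₀ M) (p : Path a b) :
    Finsupp.mapDomain (fun p => p.cons β) y (p.cons β) = y p :=
  Finsupp.mapDomain_apply (fun _ _ h => eq_of_heq (heq_of_cons_eq_cons h)) y p

theorem mapDomain_cons_apply_cons_of_ne {b' : V} (β : b ⟶ c) (β' : b' ⟶ c)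
    (h : (⟨b', β'⟩ : Σ x, x ⟶ c) ≠ ⟨b, β⟩) (y : Path a b →₀ M) (p' : Path a b') :
    Finsupp.mapDomain (fun p => p.cons β) y (p'.cons β') = 0 := by
  refine Finsupp.mapDomain_of_notMem_range _ _ fun ⟨p, hp⟩ => h ?_
  obtain rfl := obj_eq_of_cons_eq_cons hp
  rw [eq_of_heq (hom_heq_of_cons_eq_cons hp)]

end Quiver.Path

namespace QRep

variable {Λ : Type} [Ring Λ] {V : Type} {E : V → V → Type}

section Paths

theorem not_transGen_self_of_acyclic (hacyc : Acyclic E) (i : V) :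
    ¬ Relation.TransGen (fun a b : V => Nonempty (E a b)) i i := by
  let _ : Quiver V := ⟨E⟩
  have hpath : ∀ {a b : V}, Relation.TransGen (fun a b : V => Nonempty (E a b)) a b →
      ∃ p : Quiver.Path a b, 0 < p.length := by
    intro a b h
    induction h with
    | single hab => exact ⟨Quiver.Path.nil.cons hab.some, by simp⟩
    | tail _ hbc ih => exact ⟨ih.choose.cons hbc.some, by simp⟩
  intro h
  obtain ⟨p, hp⟩ := hpath h
  rw [hacyc i p] at hp
  exact hp.ne rfl

/-- By well-founded induction on `b` along the transitive closure of the arrow relation: a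
path into `b` is trivial or a path into a predecessor of `b` followed by an arrow. -/
theorem finite_path_of_acyclic [Finite V] [∀ i j, Finite (E i j)] (hacyc : Acyclic E)
    (a b : V) : Finite (@Quiver.Path V ⟨E⟩ a b) := by
  let _ : Quiver V := ⟨E⟩
  let R := Relation.TransGen fun a b : V => Nonempty (E a b)
  have : IsTrans V R := ⟨fun _ _ _ => Relation.TransGen.trans⟩
  have : Std.Irrefl R := ⟨not_transGen_self_of_acyclic hacyc⟩
  induction b using (Finite.wellFounded_of_trans_of_irrefl R).induction with
  | _ b IH =>
  have : ∀ i, Finite (Quiver.Path a i × E i b) := fun i => by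
    rcases isEmpty_or_nonempty (E i b) with _ | h
    · infer_instance
    · have := IH i (Relation.TransGen.single h)
      infer_instance
  refine Finite.of_surjective
    (fun x : PLift (a = b) ⊕ Σ i, Quiver.Path a i × E i b =>
      match x with
      | .inl h => h.down ▸ Quiver.Path.nil
      | .inr ⟨_, p, β⟩ => p.cons β) ?_
  rintro (_ | ⟨p, β⟩)
  · exact ⟨.inl ⟨rfl⟩, rfl⟩
  · exact ⟨.inr ⟨_, p, β⟩, rfl⟩

end Paths

section MonoA

variable (X : QRep Λ E) {v w : V} (α : E v w) {J : Type} [AddCommGroup J] [Module Λ J]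
  (e : X.obj v →ₗ[Λ] J)

theorem EMap_self : EMap X α e α = Finsupp.lsingle (@Quiver.Path.nil V ⟨E⟩ w) ∘ₗ e := by
  rw [EMap, dif_pos rfl]
  generalize_proofs h₁ h₂
  rw [proof_irrel h₁ ⟨rfl, HEq.rfl⟩,
    proof_irrel h₂ fun _ h => ⟨rfl, (Sigma.mk.inj_iff.mp (eq_of_heq h)).2⟩]

theorem EMap_of_ne {i j : V} (β : E i j)
    (h : (⟨i, ⟨j, β⟩⟩ : Σ a : V, Σ b : V, E a b) ≠ ⟨v, ⟨w, α⟩⟩) : EMap X α e β = 0 :=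
  dif_neg h

theorem EMap_apply_cons {i j k : V} (β : E i j) (x : X.obj i) (p : @Quiver.Path V ⟨E⟩ w k)
    (β' : E k j) :
    EMap X α e β x (@Quiver.Path.cons V ⟨E⟩ w k j p β') = 0 := by
  by_cases h : (⟨i, ⟨j, β⟩⟩ : Σ a : V, Σ b : V, E a b) = ⟨v, ⟨w, α⟩⟩
  · obtain ⟨rfl, h⟩ := Sigma.mk.inj_iff.mp h
    obtain ⟨rfl, h⟩ := Sigma.mk.inj_iff.mp (eq_of_heq h)
    cases eq_of_heq h
    rw [EMap_self]
    exact Finsupp.single_eq_of_ne (@Quiver.Path.cons_ne_nil V ⟨E⟩ _ _ p β')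
  · rw [EMap_of_ne X α e β h]
    rfl

end MonoA

section Extension

variable {G : QRep Λ E} {J : Type} [AddCommGroup J] [Module Λ J] [Module.Injective Λ J]

theorem exists_extension_single (hG : SeparatedMonic G) {k j : V} (a₀ : E k j)
    (φ : G.obj k →ₗ[Λ] J) :
    ∃ ψ : G.obj j →ₗ[Λ] J, ψ ∘ₗ G.map a₀ = φ ∧
      ∀ k' (a : E k' j), (⟨k', a⟩ : Σ k, E k j) ≠ ⟨k, a₀⟩ → ψ ∘ₗ G.map a = 0 := by
  classical
  let ι := Σ k, E k j
  obtain ⟨ψ, hψ⟩ := Module.Injective.extension_property Λ J _ _ (G.uMap j) (hG j)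
    (φ ∘ₗ DirectSum.component Λ ι (fun a => G.obj a.1) ⟨k, a₀⟩)
  have hrestr : ∀ k' (a : E k' j), ψ ∘ₗ G.map a =
      (φ ∘ₗ DirectSum.component Λ ι (fun a => G.obj a.1) ⟨k, a₀⟩) ∘ₗ
        DirectSum.lof Λ ι (fun a => G.obj a.1) ⟨k', a⟩ := by
    intro k' a
    rw [← hψ]
    ext x
    exact congrArg ψ (DirectSum.toModule_lof Λ (φ := fun a : ι => G.map a.2) ⟨k', a⟩ x).symm
  refine ⟨ψ, ?_, fun k' a ha => ?_⟩
  · rw [hrestr]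
    ext x
    simp
  · rw [hrestr, LinearMap.comp_assoc, DirectSum.component_comp_lof, dif_neg ha,
      LinearMap.comp_zero]

variable (hG : SeparatedMonic G)

noncomputable def extendBranch {k j : V} (a₀ : E k j) (φ : G.obj k →ₗ[Λ] J) :
    G.obj j →ₗ[Λ] J :=
  (exists_extension_single hG a₀ φ).choose

theorem extendBranch_comp_self {k j : V} (a₀ : E k j) (φ : G.obj k →ₗ[Λ] J) :
    extendBranch hG a₀ φ ∘ₗ G.map a₀ = φ :=
  (exists_extension_single hG a₀ φ).choose_spec.1

theorem extendBranch_comp_of_ne {k k' j : V} (a₀ : E k j) (φ : G.obj k →ₗ[Λ] J)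
    (a : E k' j) (ha : (⟨k', a⟩ : Σ k, E k j) ≠ ⟨k, a₀⟩) :
    extendBranch hG a₀ φ ∘ₗ G.map a = 0 :=
  (exists_extension_single hG a₀ φ).choose_spec.2 k' a ha

noncomputable def pathExtension {v w : V} (α : E v w) (φ : G.obj v →ₗ[Λ] J) :
    ∀ {i : V}, @Quiver.Path V ⟨E⟩ w i → (G.obj i →ₗ[Λ] J) := fun p =>
  @Quiver.Path.rec V ⟨E⟩ w (fun i _ => G.obj i →ₗ[Λ] J) (extendBranch hG α φ)
    (fun _ β ψ => extendBranch hG β ψ) _ p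

theorem pathExtension_nil {v w : V} (α : E v w) (φ : G.obj v →ₗ[Λ] J) :
    pathExtension hG α φ (@Quiver.Path.nil V ⟨E⟩ w) = extendBranch hG α φ :=
  rfl

theorem pathExtension_cons {v w i j : V} (α : E v w) (φ : G.obj v →ₗ[Λ] J)
    (p : @Quiver.Path V ⟨E⟩ w i) (β : E i j) :
    pathExtension hG α φ (@Quiver.Path.cons V ⟨E⟩ w i j p β) =
      extendBranch hG β (pathExtension hG α φ p) :=
  rfl

end Extension

section Lift

variable {G : QRep Λ E} {X : QRep Λ E} {v w : V} (α : E v w)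
  {J : Type} [AddCommGroup J] [Module Λ J] [Module.Injective Λ J] (e : X.obj v →ₗ[Λ] J)

theorem exists_lift_monoAProj [∀ i, Finite (@Quiver.Path V ⟨E⟩ w i)] (hG : SeparatedMonic G)
    (f : Hom G X) :
    ∃ g : Hom G (MonoA X α e), (MonoAProj X α e).comp g = f := by
  let _ : Quiver V := ⟨E⟩
  let φ := e ∘ₗ f.app v
  let h : ∀ i, G.obj i →ₗ[Λ] (Quiver.Path w i →₀ J) := fun i =>
    (Finsupp.linearEquivFunOnFinite Λ J (Quiver.Path w i)).symm.toLinearMap ∘ₗ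
      LinearMap.pi fun q => pathExtension hG α φ q
  have hcoord : ∀ {i j} (β : E i j) (x : G.obj i) (q : Quiver.Path w j),
      Finsupp.mapDomain (fun p => p.cons β) (h i x) q + EMap X α e β (f.app i x) q =
        pathExtension hG α φ q (G.map β x) := by
    intro i j β x q
    cases q with
    | nil =>
      rw [Quiver.Path.mapDomain_cons_apply_nil, zero_add, pathExtension_nil]
      by_cases hβ : (⟨i, β⟩ : Σ k, E k w) = ⟨v, α⟩
      · obtain ⟨rfl, hβ⟩ := Sigma.mk.inj_iff.mp hβ
        cases eq_of_heq hβ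
        rw [EMap_self, ← LinearMap.comp_apply _ (G.map β), extendBranch_comp_self]
        exact Finsupp.single_eq_same
      · rw [EMap_of_ne X α e β fun h' => hβ (by cases h'; rfl),
          ← LinearMap.comp_apply _ (G.map β), extendBranch_comp_of_ne hG α φ β hβ]
        rfl
    | cons p β' =>
      rw [EMap_apply_cons, add_zero, pathExtension_cons]
      by_cases hβ : (⟨_, β'⟩ : Σ k, E k j) = ⟨i, β⟩
      · obtain ⟨rfl, hβ⟩ := Sigma.mk.inj_iff.mp hβ
        cases eq_of_heq hβ
        rw [Quiver.Path.mapDomain_cons_apply_cons, ← LinearMap.comp_apply _ (G.map β'),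
          extendBranch_comp_self]
        rfl
      · rw [Quiver.Path.mapDomain_cons_apply_cons_of_ne β β' hβ,
          ← LinearMap.comp_apply _ (G.map β), extendBranch_comp_of_ne hG _ _ β (Ne.symm hβ)]
        rfl
  refine ⟨⟨fun i => (f.app i).prod (h i), fun β => ?_⟩, rfl⟩
  ext x : 1
  refine Prod.ext (LinearMap.congr_fun (f.comm β) x) (Finsupp.ext fun q => hcoord β x q)

end Lift

theorem IsMonoIter.exists_lift (hpath : ∀ w i, Finite (@Quiver.Path V ⟨E⟩ w i))
    {L : List (Σ i : V, Σ j : V, E i j)} {M N : QRep Λ E} {π : Hom N M}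
    (hiter : IsMonoIter L M N π) {G : QRep Λ E} (hG : SeparatedMonic G) (f : Hom G M) :
    ∃ g : Hom G N, π.comp g = f := by
  induction hiter with
  | nil M => exact ⟨f, rfl⟩
  | @cons L M N π v w α J _ _ e henv _ ih =>
    have := henv.1
    have := hpath w
    obtain ⟨g, rfl⟩ := ih f
    obtain ⟨g', rfl⟩ := exists_lift_monoAProj α e hG g
    exact ⟨g', rfl⟩

end QRep

theorem monoIter_is_right_approximation_general
    (Λ : Type) [Ring Λ]
    {V : Type} [Fintype V] {E : V → V → Type} [∀ i j, Fintype (E i j)]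
    (hacyc : QRep.Acyclic E)
    (L : List (Σ i : V, Σ j : V, E i j))
    (M N : QRep Λ E)
    (π : QRep.Hom N M) (hiter : QRep.IsMonoIter L M N π)
    (hsep : QRep.SeparatedMonic N) :
    QRep.IsRightApprox π :=
  ⟨hsep, fun _ hG f => hiter.exists_lift (QRep.finite_path_of_acyclic hacyc) hG f⟩

/-- If `A = (α_s, …, α_1)` is a sequence of arrows such that for
`i > j` there is no path from `t(α_i)` to `s(α_j)`, and `Mono_A(M)` is separated
monic, then the epimorphism `Mono_A(M) → M` is a right approximation of `M` in the
category of Gorenstein-projective (separated monic) representations. -/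
theorem monoIter_is_right_approximation
    (k : Type) [Field k] (Λ : Type) [Ring Λ] [Algebra k Λ] [FiniteDimensional k Λ]
    (hself : Module.Injective Λ Λ)
    {V : Type} [Fintype V] {E : V → V → Type} [∀ i j, Fintype (E i j)]
    (hacyc : QRep.Acyclic E)
    (L : List (Σ i : V, Σ j : V, E i j))
    (hL : L.Pairwise fun x y => IsEmpty (QRep.Path E y.2.1 x.1))
    (M N : QRep Λ E) (hfin : ∀ i, Module.Finite Λ (M.obj i))
    (π : QRep.Hom N M) (hiter : QRep.IsMonoIter L M N π)
    (hsep : QRep.SeparatedMonic N) :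
    QRep.IsRightApprox π :=
  monoIter_is_right_approximation_general Λ hacyc L M N π hiter hsep
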